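/- For every n ≥ 2 and every integer m with n − 1 ≤ m ≤ ⌊(n − 1)²/4⌋ + 1, there exists a uniquely traceable graph of order n with exactly m edges. -/

import Mathlib

open SimpleGraph

/-- The set of edge sets of hamiltonian cycles of `G` (hamiltonian cycles are counted
as subgraphs, i.e. by their edge sets). -/
def hamCycleSets {V : Type*} (G : SimpleGraph V) : Set (Set (Sym2 V)) :=
  letI := Classical.decEq V
  {s | ∃ (v : V) (w : G.Walk v v), w.IsHamiltonianCycle ∧ {e | e ∈ w.edges} = s}

/-- The number of hamiltonian cycles of `G`, counted as subgraphs. -/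
noncomputable def hamCount {V : Type*} (G : SimpleGraph V) : ℕ := (hamCycleSets G).ncard

/-- The set of edge sets of cycles of length `k` in `G`. -/
def cycleSets {V : Type*} (G : SimpleGraph V) (k : ℕ) : Set (Set (Sym2 V)) :=
  {s | ∃ (v : V) (w : G.Walk v v), w.IsCycle ∧ w.length = k ∧ {e | e ∈ w.edges} = s}

/-- The number of cycles of length `k` in `G`, counted as subgraphs. -/
noncomputable def cycleCount {V : Type*} (G : SimpleGraph V) (k : ℕ) : ℕ := (cycleSets G k).ncard

/-- The set of edge sets of hamiltonian paths of `G`. -/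
def hamPathSets {V : Type*} (G : SimpleGraph V) : Set (Set (Sym2 V)) :=
  letI := Classical.decEq V
  {s | ∃ (u v : V) (w : G.Walk u v), w.IsHamiltonian ∧ {e | e ∈ w.edges} = s}

/-- The number of hamiltonian paths of `G`, counted as subgraphs. -/
noncomputable def hamPathCount {V : Type*} (G : SimpleGraph V) : ℕ := (hamPathSets G).ncard

/-- The degree of the vertex `v` in `G`. -/
noncomputable def vdeg {V : Type*} (G : SimpleGraph V) (v : V) : ℕ := (G.neighborSet v).ncard

/-- `G` contains a subdivision of `H`: there are branch vertices (an injective image of the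
vertices of `H`) joined by internally disjoint paths, one for each edge of `H`, whose internal
vertices avoid all branch vertices. -/
def ContainsSubdivision {V W : Type*} (G : SimpleGraph V) (H : SimpleGraph W) : Prop :=
  ∃ (f : W → V) (P : ∀ a b : W, H.Adj a b → G.Walk (f a) (f b)),
    Function.Injective f ∧
    (∀ a b (h : H.Adj a b), (P a b h).IsPath) ∧
    (∀ a b (h : H.Adj a b) (c : W), f c ∈ (P a b h).support → c = a ∨ c = b) ∧
    (∀ a b (h : H.Adj a b) (c d : W) (h' : H.Adj c d), s(a, b) ≠ s(c, d) →
      ∀ v, v ∈ (P a b h).support → v ∈ (P c d h').support →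
        (v = f a ∨ v = f b) ∧ (v = f c ∨ v = f d))

/-- A graph is planar iff (by Kuratowski's theorem) it contains no subdivision of `K₅`
nor of `K₃,₃`. -/
def PlanarGraph {V : Type*} (G : SimpleGraph V) : Prop :=
  ¬ ContainsSubdivision G (completeGraph (Fin 5)) ∧
  ¬ ContainsSubdivision G (completeBipartiteGraph (Fin 3) (Fin 3))

/-!
Add to the path `0 — 1 — ⋯ — (n - 1)` any set of chords `{a, b}` with `a` odd and
`a + 2 ≤ b ≤ n - 2`. The ends `0` and `n - 1` still have a single neighbour, so every hamiltonian
path runs from `0` to `n - 1`. Follow it from `0` and suppose it has visited `0, …, k` in order.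
An even vertex has no neighbour above it except its successor, so if the path now leaves `k`
along a chord, `k` is odd and the even vertex `k + 1` is visited later, in the interior of the
path; both of its neighbours on the path are then unvisited, but `k + 2` is its only unvisited
neighbour. Hence the path is `0, 1, …, n - 1`. There are `⌊(n - 3)² / 4⌋` admissible chords and
`⌊(n - 1)² / 4⌋ + 1 = (n - 1) + ⌊(n - 3)² / 4⌋`, which gives every edge count in the range.
-/

namespace SimpleGraph.Walk

variable {V : Type*} {G : SimpleGraph V} {u v : V} {p : G.Walk u v}

lemma adj_getVert_sub_one (p : G.Walk u v) {i : ℕ} (h₀ : 0 < i) (hi : i ≤ p.length) :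
    G.Adj (p.getVert (i - 1)) (p.getVert i) := by
  simpa [Nat.sub_add_cancel h₀] using p.adj_getVert_succ (i := i - 1) (by omega)

lemma IsPath.getVert_sub_one_ne_getVert_add_one (hp : p.IsPath) {i : ℕ} (hi : i < p.length) :
    p.getVert (i - 1) ≠ p.getVert (i + 1) := fun h => by
  have := hp.getVert_injOn (by simp; omega) (by simp; omega) h
  omega

lemma IsPath.eq_start_or_eq_end_of_adj_unique (hp : p.IsPath) {x : V} (hx : x ∈ p.support)
    (hx₁ : ∀ y z, G.Adj x y → G.Adj x z → y = z) : x = u ∨ x = v := by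
  obtain ⟨i, rfl, hi⟩ := mem_support_iff_exists_getVert.mp hx
  rcases Nat.eq_zero_or_pos i with rfl | h₀
  · exact .inl p.getVert_zero
  rcases hi.eq_or_lt with rfl | hi
  · exact .inr p.getVert_length
  exact (hp.getVert_sub_one_ne_getVert_add_one hi
    (hx₁ _ _ (p.adj_getVert_sub_one h₀ hi.le).symm (p.adj_getVert_succ hi))).elim

lemma IsHamiltonian.reverse [DecidableEq V] (hp : p.IsHamiltonian) : p.reverse.IsHamiltonian :=
  fun a => by simpa [support_reverse] using hp a

lemma IsTrail.ncard_edgeSet (hp : p.IsTrail) : p.edgeSet.ncard = p.length := by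
  classical
  rw [show p.edgeSet = ↑p.edges.toFinset by ext; simp [mem_edgeSet],
    Set.ncard_coe_finset, List.toFinset_card_of_nodup hp.edges_nodup, length_edges]

end SimpleGraph.Walk

lemma SimpleGraph.val_le_val_add_length_of_pathGraph_walk {n : ℕ} {u v : Fin n}
    (p : (pathGraph n).Walk u v) : (v : ℕ) ≤ u + p.length := by
  induction p with
  | nil => simp
  | cons h _ ih => rw [pathGraph_adj] at h; simp only [Walk.length_cons]; omega

lemma SimpleGraph.exists_isHamiltonian_pathGraph {n : ℕ} (hn : 0 < n) :
    ∃ (u v : Fin n) (p : (pathGraph n).Walk u v), p.IsHamiltonian := by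
  obtain ⟨p, hp⟩ := (pathGraph_preconnected n).exists_isPath ⟨0, hn⟩ ⟨n - 1, by omega⟩
  have h₁ := val_le_val_add_length_of_pathGraph_walk p
  have h₂ := hp.length_lt
  simp only [Fintype.card_fin] at h₁ h₂
  exact ⟨_, _, p, Walk.isHamiltonian_iff_isPath_and_length_eq.mpr ⟨hp, by simp; omega⟩⟩

lemma SimpleGraph.Walk.edgeSet_eq_pathGraph {n : ℕ} {G : SimpleGraph (Fin n)} {u v : Fin n}
    {p : G.Walk u v} (hlen : p.length = n - 1) (hp : ∀ t ≤ p.length, (p.getVert t : ℕ) = t) :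
    p.edgeSet = (pathGraph n).edgeSet := by
  ext e
  induction e using Sym2.ind with
  | _ a b =>
  rw [Walk.mem_edgeSet, Walk.mk_mem_edges_iff_exists, SimpleGraph.mem_edgeSet, pathGraph_adj]
  constructor
  · rintro ⟨i, hi, he⟩
    have h₁ := hp i (by omega)
    have h₂ := hp (i + 1) hi
    rcases Sym2.eq_iff.mp he with ⟨rfl, rfl⟩ | ⟨rfl, rfl⟩ <;> omega
  · have key : ∀ a b : Fin n, (a : ℕ) + 1 = b → s(p.getVert a, p.getVert (a + 1)) = s(a, b) :=
      fun a b hab => by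
        have := b.isLt
        have h₁ : p.getVert a = a := Fin.ext (hp a (by omega))
        have h₂ : p.getVert (a + 1) = b := Fin.ext (by rw [hp _ (by omega)]; omega)
        rw [h₁, h₂]
    rintro (h | h)
    · exact ⟨a, by omega, key a b h⟩
    · exact ⟨b, by omega, (key b a h).trans Sym2.eq_swap⟩

def IsChord (n a b : ℕ) : Prop := a % 2 = 1 ∧ a + 2 ≤ b ∧ b + 2 ≤ n

def IsChordedPath {n : ℕ} (G : SimpleGraph (Fin n)) : Prop :=
  ∀ u v, G.Adj u v → u < v → (u : ℕ) + 1 = v ∨ IsChord n u v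

lemma isChordedPath_pathGraph (n : ℕ) : IsChordedPath (pathGraph n) := fun u v h huv => by
  rw [pathGraph_adj] at h
  exact .inl (by omega)

namespace IsChordedPath

variable {n : ℕ} {G : SimpleGraph (Fin n)}

lemma adj_cases (hG : IsChordedPath G) {u v : Fin n} (h : G.Adj u v) :
    (u : ℕ) + 1 = v ∨ (v : ℕ) + 1 = u ∨ IsChord n u v ∨ IsChord n v u := by
  rcases lt_or_gt_of_ne h.ne with huv | huv
  · rcases hG u v h huv with h | h <;> tauto
  · rcases hG v u h.symm huv with h | h <;> tauto

lemma val_eq_of_adj_of_val_eq_zero (hG : IsChordedPath G) {u v : Fin n} (h : G.Adj u v)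
    (hu : (u : ℕ) = 0) : (v : ℕ) = 1 := by
  rcases hG.adj_cases h with _ | _ | ⟨_, _, _⟩ | ⟨_, _, _⟩ <;> omega

lemma val_eq_of_adj_of_val_eq_last (hG : IsChordedPath G) {u v : Fin n} (h : G.Adj u v)
    (hu : (u : ℕ) = n - 1) : (v : ℕ) = n - 2 := by
  have := v.isLt
  rcases hG.adj_cases h with _ | _ | ⟨_, _, _⟩ | ⟨_, _, _⟩ <;> omega

lemma val_eq_add_one_of_adj_of_even (hG : IsChordedPath G) {u v : Fin n} (h : G.Adj u v)
    (hu : (u : ℕ) % 2 = 0) (huv : (u : ℕ) ≤ v) : (v : ℕ) = u + 1 := by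
  have := h.ne
  rcases hG.adj_cases h with _ | _ | ⟨_, _, _⟩ | ⟨_, _, _⟩ <;> omega

lemma val_ends (hG : IsChordedPath G) (hn : 2 ≤ n) {u v : Fin n} {p : G.Walk u v}
    (hp : p.IsHamiltonian) :
    (u : ℕ) = 0 ∧ (v : ℕ) = n - 1 ∨ (u : ℕ) = n - 1 ∧ (v : ℕ) = 0 := by
  have h₀ := hp.isPath.eq_start_or_eq_end_of_adj_unique (hp.mem_support ⟨0, by omega⟩)
    fun y z hy hz => Fin.ext <| (hG.val_eq_of_adj_of_val_eq_zero hy rfl).trans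
      (hG.val_eq_of_adj_of_val_eq_zero hz rfl).symm
  have h₁ := hp.isPath.eq_start_or_eq_end_of_adj_unique (hp.mem_support ⟨n - 1, by omega⟩)
    fun y z hy hz => Fin.ext <| (hG.val_eq_of_adj_of_val_eq_last hy rfl).trans
      (hG.val_eq_of_adj_of_val_eq_last hz rfl).symm
  simp only [Fin.ext_iff] at h₀ h₁
  omega

lemma val_getVert_eq (hG : IsChordedPath G) {u v : Fin n} {p : G.Walk u v}
    (hp : p.IsHamiltonian) (hu : (u : ℕ) = 0) (hv : (v : ℕ) = n - 1) :
    ∀ t ≤ p.length, (p.getVert t : ℕ) = t := by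
  have hlen : p.length = n - 1 := by simpa using hp.length_eq
  have hinj := hp.isPath.getVert_injOn
  intro t
  induction t using Nat.strong_induction_on with
  | _ t ih =>
  intro ht
  have fresh : ∀ j ≤ p.length, t ≤ j → t ≤ (p.getVert j : ℕ) := fun j hj htj => by
    by_contra! h
    have := hinj (by simp; omega) (by simp; omega)
      (Fin.ext (ih _ h (by omega)) : p.getVert (p.getVert j) = p.getVert j)
    omega
  rcases t with _ | k
  · simpa using hu
  have hk := ih k (by omega) (by omega)
  have hadj := p.adj_getVert_succ (i := k) (by omega)
  by_contra hne
  obtain ⟨hk_odd, -, hchord⟩ : IsChord n k (p.getVert (k + 1)) := by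
    have := fresh (k + 1) ht le_rfl
    rcases hG.adj_cases hadj with _ | _ | h | ⟨_, _, _⟩ <;> first | omega | rwa [hk] at h
  obtain ⟨r, hr, hrlen⟩ := Walk.mem_support_iff_exists_getVert.mp
    (hp.mem_support ⟨k + 1, by have := (p.getVert (k + 1)).isLt; omega⟩)
  have hr_val : (p.getVert r : ℕ) = k + 1 := by rw [hr]
  have hkr : k + 2 ≤ r := by
    by_contra! h
    rcases Nat.lt_succ_iff_lt_or_eq.mp h with h | rfl
    · have := ih r h (by omega); omega
    · exact hne hr_val
  have hr_lt : r < p.length := by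
    refine lt_of_le_of_ne hrlen fun h => ?_
    have := hv ▸ congrArg Fin.val (h ▸ p.getVert_length)
    omega
  have next : ∀ j ≤ p.length, k + 1 ≤ j → G.Adj (p.getVert r) (p.getVert j) →
      (p.getVert j : ℕ) = k + 2 := fun j hj hkj hadj => by
    have := hG.val_eq_add_one_of_adj_of_even hadj (by omega) (hr_val ▸ fresh j hj hkj)
    omega
  exact hp.isPath.getVert_sub_one_ne_getVert_add_one hr_lt <| Fin.ext <|
    (next _ (by omega) (by omega) (p.adj_getVert_sub_one (by omega) hrlen).symm).trans
      (next _ hr_lt (by omega) (p.adj_getVert_succ hr_lt)).symm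

lemma edgeSet_eq_of_isHamiltonian (hG : IsChordedPath G) (hn : 2 ≤ n) {u v : Fin n}
    {p : G.Walk u v} (hp : p.IsHamiltonian) : p.edgeSet = (pathGraph n).edgeSet := by
  rcases hG.val_ends hn hp with ⟨hu, hv⟩ | ⟨hu, hv⟩
  · exact Walk.edgeSet_eq_pathGraph (by simpa using hp.length_eq)
      (hG.val_getVert_eq hp hu hv)
  · rw [← Walk.edgeSet_eq_pathGraph (by simpa using hp.reverse.length_eq)
      (hG.val_getVert_eq hp.reverse hv hu)]
    ext e
    simp [Walk.mem_edgeSet]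

lemma hamPathSets_eq (hG : IsChordedPath G) (hle : pathGraph n ≤ G) (hn : 2 ≤ n) :
    hamPathSets G = {(pathGraph n).edgeSet} := by
  ext s
  simp only [hamPathSets, Set.mem_ofPred_eq, Set.mem_singleton_iff]
  constructor
  · rintro ⟨u, v, p, hp, rfl⟩
    exact hG.edgeSet_eq_of_isHamiltonian hn (by convert hp)
  · rintro rfl
    obtain ⟨u, v, p, hp⟩ := exists_isHamiltonian_pathGraph (by omega : 0 < n)
    have hq := hp.map (f := Hom.ofLE hle) Function.bijective_id
    exact ⟨_, _, _, by convert hq, hG.edgeSet_eq_of_isHamiltonian hn hq⟩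

end IsChordedPath

lemma SimpleGraph.ncard_edgeSet_pathGraph (n : ℕ) : (pathGraph n).edgeSet.ncard = n - 1 := by
  rcases lt_or_ge n 2 with hn | hn
  · have : pathGraph n = ⊥ := by
      ext u v
      simp only [pathGraph_adj, bot_adj, iff_false]
      omega
    rw [this, edgeSet_bot, Set.ncard_empty]
    omega
  obtain ⟨u, v, p, hp⟩ := exists_isHamiltonian_pathGraph (by omega : 0 < n)
  rw [← (isChordedPath_pathGraph n).edgeSet_eq_of_isHamiltonian hn hp,
    hp.isPath.isTrail.ncard_edgeSet, hp.length_eq, Fintype.card_fin]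

section ChordGraph

variable {n : ℕ}

-- An edge is recorded by the values of its ends in increasing order, so that sets of edges
-- can be counted as sets of pairs of naturals.
def sortedVals (e : Sym2 (Fin n)) : ℕ × ℕ := (e.inf, e.sup)

lemma sortedVals_injective : Function.Injective (sortedVals (n := n)) := fun e f h => by
  simp only [sortedVals, Prod.mk.injEq, Fin.val_inj] at h
  exact Sym2.sortEquiv.injective (Subtype.ext (Prod.ext h.1 h.2))

@[simp]
lemma sortedVals_mk (u v : Fin n) : sortedVals s(u, v) = (min (u : ℕ) v, max (u : ℕ) v) := by
  simp [sortedVals]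

def chordGraph (n : ℕ) (T : Finset (ℕ × ℕ)) : SimpleGraph (Fin n) :=
  pathGraph n ⊔ fromEdgeSet (sortedVals ⁻¹' T)

variable {T : Finset (ℕ × ℕ)}

lemma isChordedPath_chordGraph (hT : ∀ p ∈ T, IsChord n p.1 p.2) :
    IsChordedPath (chordGraph n T) := fun u v h huv => by
  simp only [chordGraph, sup_adj, pathGraph_adj, fromEdgeSet_adj, Set.mem_preimage,
    Finset.mem_coe] at h
  rcases h with h | ⟨h, -⟩
  · exact .inl (by omega)
  · have huv : (u : ℕ) < v := huv
    simpa [huv.le] using Or.inr (hT _ h)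

lemma ncard_edgeSet_chordGraph (hT : ∀ p ∈ T, IsChord n p.1 p.2) :
    (chordGraph n T).edgeSet.ncard = n - 1 + T.card := by
  have gap (e : Sym2 (Fin n)) (he : sortedVals e ∈ T) : (sortedVals e).1 + 2 ≤ (sortedVals e).2 :=
    (hT _ he).2.1
  have hdiag : Disjoint (sortedVals (n := n) ⁻¹' T) Sym2.diagSet := by
    refine Set.disjoint_left.mpr fun e he hd => ?_
    induction e using Sym2.ind with
    | _ u v =>
      have := gap _ he
      simp only [Sym2.mem_diagSet, Sym2.mk_isDiag_iff] at hd
      simp [hd] at this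
  have hpath : Disjoint (pathGraph n).edgeSet (sortedVals ⁻¹' T) := by
    refine Set.disjoint_left.mpr fun e hp he => ?_
    induction e using Sym2.ind with
    | _ u v =>
      have := gap _ he
      rw [mem_edgeSet, pathGraph_adj] at hp
      simp only [sortedVals_mk] at this
      omega
  have hrange : ↑T ⊆ Set.range (sortedVals (n := n)) := fun p hp => by
    obtain ⟨-, h₁, h₂⟩ := hT p hp
    refine ⟨s(⟨p.1, by omega⟩, ⟨p.2, by omega⟩), ?_⟩
    simp only [sortedVals_mk]
    exact Prod.ext (by simp; omega) (by simp; omega)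
  rw [chordGraph, edgeSet_sup, edgeSet_fromEdgeSet, hdiag.sdiff_eq_left,
    Set.ncard_union_eq hpath, ncard_edgeSet_pathGraph,
    Set.ncard_preimage_of_injective_subset_range sortedVals_injective hrange,
    Set.ncard_coe_finset]

end ChordGraph

lemma sum_range_div_two_add (M : ℕ) : ∑ c ∈ Finset.range M, c / 2 + M = (M + 1) ^ 2 / 4 := by
  induction M with
  | zero => rfl
  | succ M ih =>
    rw [Finset.sum_range_succ]
    obtain ⟨d, rfl | rfl⟩ := Nat.even_or_odd' M
    · have h₁ : (2 * d + 1) ^ 2 = 4 * (d * d) + 4 * d + 1 := by ring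
      have h₂ : (2 * d + 1 + 1) ^ 2 = 4 * (d * d) + 8 * d + 4 := by ring
      omega
    · have h₁ : (2 * d + 1 + 1) ^ 2 = 4 * (d * d) + 8 * d + 4 := by ring
      have h₂ : (2 * d + 1 + 1 + 1) ^ 2 = 4 * (d * d) + 12 * d + 9 := by ring
      omega

def chordPairs (n : ℕ) : Finset (ℕ × ℕ) :=
  ((Finset.range (n - 2)).sigma fun c => Finset.range (c / 2)).image
    fun x => (2 * x.2 + 1, x.1 + 1)

lemma isChord_of_mem_chordPairs {n : ℕ} {p : ℕ × ℕ} (hp : p ∈ chordPairs n) :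
    IsChord n p.1 p.2 := by
  simp only [chordPairs, Finset.mem_image, Finset.mem_sigma, Finset.mem_range] at hp
  obtain ⟨⟨c, i⟩, ⟨hc, hi⟩, rfl⟩ := hp
  dsimp only at hc hi ⊢
  exact ⟨by omega, by omega, by omega⟩

lemma card_chordPairs {n : ℕ} (hn : 2 ≤ n) :
    n - 1 + (chordPairs n).card = (n - 1) ^ 2 / 4 + 1 := by
  have hinj : Function.Injective fun x : (_ : ℕ) × ℕ => (2 * x.2 + 1, x.1 + 1) := by
    rintro ⟨c, i⟩ ⟨d, j⟩ h
    simp only [Prod.mk.injEq] at h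
    obtain ⟨rfl, rfl⟩ : c = d ∧ i = j := by omega
    rfl
  rw [chordPairs, Finset.card_image_of_injective _ hinj, Finset.card_sigma]
  simp only [Finset.card_range]
  obtain ⟨M, rfl⟩ : ∃ M, n = M + 2 := ⟨n - 2, by omega⟩
  have := sum_range_div_two_add M
  simp only [Nat.add_sub_cancel, show M + 2 - 1 = M + 1 by omega]
  omega

theorem stmt16 (n m : ℕ) (hn : 2 ≤ n) (hm₁ : n - 1 ≤ m) (hm₂ : m ≤ (n - 1) ^ 2 / 4 + 1) :
    ∃ G : SimpleGraph (Fin n), hamPathCount G = 1 ∧ G.edgeSet.ncard = m := by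
  obtain ⟨T, hT, hTcard⟩ := Finset.exists_subset_card_eq
    (show m - (n - 1) ≤ (chordPairs n).card by have := card_chordPairs hn; omega)
  have hchord : ∀ p ∈ T, IsChord n p.1 p.2 := fun p hp => isChord_of_mem_chordPairs (hT hp)
  refine ⟨chordGraph n T, ?_, ?_⟩
  · rw [hamPathCount, (isChordedPath_chordGraph hchord).hamPathSets_eq le_sup_left hn,
      Set.ncard_singleton]
  · rw [ncard_edgeSet_chordGraph hchord, hTcard]
    omega
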